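/- arXiv:0811.3075 — 3 statements merged into one kernel-verified Lean document; each statement's English description precedes it below -/
import Mathlib

section
/- For all real numbers a, b with 0 < a < 1, 0 < b < 1, and all x, z > 0, the quadruple integral ∫₀^{min(z,x)} ∫₀^{x−v} ∫₀^∞ ∫₀^w (z−v)^{b−1} (x−v−y)^{a−1} (w−u)^{b−1} (w+y)^{−(a+b+1)} du dw dy dv equals [π Γ(a) Γ(b) / (sin(πa) Γ(a+b+1))] · (z^b − (z − min(z,x))^b)/b. -/
/-!
The integral is computed from the inside out, every layer being elementary or a Beta integral.
The `u`-integral is `w ^ b / b`; scaling `w = y t` and substituting `t = s / (1 - s)` turns the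
`w`-integral into `y ^ (-a) B(b + 1, a)`; the `y`-integral is then `B(1 - a, a) = π / sin (π a)`
by the reflection formula; the `v`-integral is elementary. Finally `Γ(b + 1) / b = Γ(b)`.
-/

open MeasureTheory Real Set

open ProbabilityTheory (beta beta_eq_betaIntegralReal)

theorem integral_rpow_mul_one_sub_rpow {p q : ℝ} (hp : 0 < p) (hq : 0 < q) :
    ∫ t in (0:ℝ)..1, t ^ (p - 1) * (1 - t) ^ (q - 1) = beta p q := by
  have hcomplex : Complex.betaIntegral p q
      = ((∫ t in (0:ℝ)..1, t ^ (p - 1) * (1 - t) ^ (q - 1) : ℝ) : ℂ) := by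
    rw [Complex.betaIntegral, ← intervalIntegral.integral_ofReal]
    refine intervalIntegral.integral_congr fun t ht => ?_
    rw [uIcc_of_le zero_le_one] at ht
    push_cast
    rw [Complex.ofReal_cpow ht.1, Complex.ofReal_cpow (sub_nonneg.2 ht.2)]
    push_cast
    rfl
  rw [beta_eq_betaIntegralReal p q hp hq, hcomplex, Complex.ofReal_re]

theorem integral_Ioo_rpow_mul_sub_rpow {p q c : ℝ} (hp : 0 < p) (hq : 0 < q) (hc : 0 < c) :
    ∫ t in Ioo 0 c, t ^ (p - 1) * (c - t) ^ (q - 1) = c ^ (p + q - 1) * beta p q := by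
  have hscale : ∀ s ∈ uIcc (0:ℝ) 1, (c * s) ^ (p - 1) * (c - c * s) ^ (q - 1)
      = c ^ (p + q - 2) * (s ^ (p - 1) * (1 - s) ^ (q - 1)) := by
    intro s hs
    rw [uIcc_of_le zero_le_one] at hs
    rw [← mul_one_sub, mul_rpow hc.le hs.1, mul_rpow hc.le (sub_nonneg.2 hs.2),
      show p + q - 2 = (p - 1) + (q - 1) by ring, rpow_add hc]
    ring
  have hsubst := intervalIntegral.mul_integral_comp_mul_left
    (f := fun t => t ^ (p - 1) * (c - t) ^ (q - 1)) (a := 0) (b := 1) c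
  rw [mul_zero, mul_one, intervalIntegral.integral_congr hscale,
    intervalIntegral.integral_const_mul, integral_rpow_mul_one_sub_rpow hp hq, ← mul_assoc,
    mul_comm c, ← rpow_add_one hc.ne', show p + q - 2 + 1 = p + q - 1 by ring] at hsubst
  rw [← integral_Ioc_eq_integral_Ioo, ← intervalIntegral.integral_of_le hc.le, ← hsubst]

theorem integral_Ioi_rpow_mul_one_add_rpow {p q : ℝ} (hp : 0 < p) (hq : 0 < q) :
    ∫ t in Ioi 0, t ^ (p - 1) * (1 + t) ^ (-(p + q)) = beta p q := by
  set φ : ℝ → ℝ := fun s => s / (1 - s)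
  have himage : φ '' Ioo 0 1 = Ioi 0 := by
    ext t
    constructor
    · rintro ⟨s, ⟨hs0, hs1⟩, rfl⟩
      exact div_pos hs0 (sub_pos.2 hs1)
    · intro (ht : 0 < t)
      refine ⟨t / (1 + t), ⟨by positivity, (div_lt_one (by positivity)).2 (by linarith)⟩, ?_⟩
      simp only [φ]
      field_simp
      ring
  have hderiv : ∀ s ∈ Ioo (0:ℝ) 1, HasDerivWithinAt φ ((1 - s) ^ 2)⁻¹ (Ioo 0 1) s := by
    intro s hs
    have hne : 1 - s ≠ 0 := (sub_pos.2 hs.2).ne'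
    refine (((hasDerivAt_id s).div ((hasDerivAt_id s).const_sub 1) hne).hasDerivWithinAt).congr_deriv ?_
    simp only [id]
    ring
  have hinj : InjOn φ (Ioo 0 1) := by
    intro s hs t ht hst
    have := (sub_pos.2 hs.2).ne'
    have := (sub_pos.2 ht.2).ne'
    simp only [φ] at hst
    field_simp at hst
    linarith
  have hintegrand : ∀ s ∈ Ioo (0:ℝ) 1,
      |((1 - s) ^ 2)⁻¹| • ((φ s) ^ (p - 1) * (1 + φ s) ^ (-(p + q)))
        = s ^ (p - 1) * (1 - s) ^ (q - 1) := by
    intro s ⟨hs0, hs1⟩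
    have hr : 0 < 1 - s := sub_pos.2 hs1
    have hexp : (1 - s) ^ (q - 1) = (1 - s) ^ (p + q) / ((1 - s) ^ (p - 1) * (1 - s) ^ 2) := by
      rw [← rpow_natCast, ← rpow_add hr, ← rpow_sub hr]
      ring_nf
    rw [hexp, abs_of_pos (by positivity), smul_eq_mul,
      show 1 + φ s = (1 - s)⁻¹ by simp only [φ]; field_simp; ring,
      div_rpow hs0.le hr.le, inv_rpow hr.le, ← rpow_neg hr.le, neg_neg]
    field_simp
  rw [← himage, integral_image_eq_integral_abs_deriv_smul measurableSet_Ioo hderiv hinj,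
    setIntegral_congr_fun measurableSet_Ioo hintegrand, ← integral_Ioc_eq_integral_Ioo,
    ← intervalIntegral.integral_of_le zero_le_one, integral_rpow_mul_one_sub_rpow hp hq]

theorem integral_Ioi_rpow_mul_add_rpow {p q y : ℝ} (hp : 0 < p) (hq : 0 < q) (hy : 0 < y) :
    ∫ w in Ioi 0, w ^ (p - 1) * (w + y) ^ (-(p + q)) = y ^ (-q) * beta p q := by
  have hscale : ∀ t ∈ Ioi (0:ℝ), (y * t) ^ (p - 1) * (y * t + y) ^ (-(p + q))
      = y ^ (-q - 1) * (t ^ (p - 1) * (1 + t) ^ (-(p + q))) := by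
    intro t (ht : 0 < t)
    rw [show y * t + y = y * (1 + t) by ring, mul_rpow hy.le ht.le, mul_rpow hy.le (by positivity),
      show -q - 1 = (p - 1) + -(p + q) by ring, rpow_add hy]
    ring
  have hsubst := integral_comp_mul_left_Ioi (fun w => w ^ (p - 1) * (w + y) ^ (-(p + q))) 0 hy
  rw [mul_zero, setIntegral_congr_fun measurableSet_Ioi hscale, integral_const_mul,
    integral_Ioi_rpow_mul_one_add_rpow hp hq, smul_eq_mul] at hsubst
  rw [← mul_inv_cancel_left₀ hy.ne' (∫ w in Ioi 0, _), ← hsubst, ← mul_assoc,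
    ← rpow_one_add' hy.le (by linarith)]
  ring_nf

theorem integral_Ioo_sub_rpow {b m z : ℝ} (hb : 0 < b) (hm : 0 ≤ m) :
    ∫ v in Ioo 0 m, (z - v) ^ (b - 1) = (z ^ b - (z - m) ^ b) / b := by
  rw [← integral_Ioc_eq_integral_Ioo, ← intervalIntegral.integral_of_le hm,
    intervalIntegral.integral_comp_sub_left (fun v => v ^ (b - 1)) z,
    integral_rpow (Or.inl (by linarith)), sub_zero, sub_add_cancel]

theorem integral_Ioi_integral_Ioo_sub_rpow_mul_add_rpow {a b y : ℝ} (ha : 0 < a) (hb : 0 < b)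
    (hy : 0 < y) (k : ℝ) :
    ∫ w in Ioi 0, ∫ u in Ioo 0 w, k * (w - u) ^ (b - 1) * (w + y) ^ (-(a + b + 1))
      = k / b * (y ^ (-a) * beta (b + 1) a) := by
  have hinner : ∀ w ∈ Ioi (0:ℝ),
      ∫ u in Ioo 0 w, k * (w - u) ^ (b - 1) * (w + y) ^ (-(a + b + 1))
        = k / b * (w ^ (b + 1 - 1) * (w + y) ^ (-(b + 1 + a))) := by
    intro w (hw : 0 < w)
    rw [integral_mul_const, integral_const_mul, integral_Ioo_sub_rpow hb hw.le, sub_self,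
      zero_rpow hb.ne', add_sub_cancel_right, show b + 1 + a = a + b + 1 by ring]
    ring
  rw [setIntegral_congr_fun measurableSet_Ioi hinner, integral_const_mul,
    integral_Ioi_rpow_mul_add_rpow (by linarith) ha hy]

theorem integral_Ioo_integral_Ioi_integral_Ioo_sub_rpow_mul_add_rpow {a b c : ℝ} (ha : 0 < a)
    (ha1 : a < 1) (hb : 0 < b) (hc : 0 < c) (k : ℝ) :
    ∫ y in Ioo 0 c, ∫ w in Ioi 0, ∫ u in Ioo 0 w,
        k * (c - y) ^ (a - 1) * (w - u) ^ (b - 1) * (w + y) ^ (-(a + b + 1))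
      = k * (beta (b + 1) a / b * beta (1 - a) a) := by
  have hinner : ∀ y ∈ Ioo 0 c, ∫ w in Ioi 0, ∫ u in Ioo 0 w,
        k * (c - y) ^ (a - 1) * (w - u) ^ (b - 1) * (w + y) ^ (-(a + b + 1))
      = k * (beta (b + 1) a / b) * (y ^ (1 - a - 1) * (c - y) ^ (a - 1)) := by
    intro y hy
    rw [integral_Ioi_integral_Ioo_sub_rpow_mul_add_rpow ha hb hy.1, sub_sub_cancel_left]
    ring
  rw [setIntegral_congr_fun measurableSet_Ioo hinner, integral_const_mul,
    integral_Ioo_rpow_mul_sub_rpow (sub_pos.2 ha1) ha hc, sub_add_cancel, sub_self, rpow_zero]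
  ring

theorem statement8_general (a b x z : ℝ) (ha : 0 < a) (ha1 : a < 1) (hb : 0 < b)
    (hx : 0 < x) (hz : 0 < z) :
    (∫ v in Ioo (0:ℝ) (min z x), ∫ y in Ioo (0:ℝ) (x - v), ∫ w in Ioi (0:ℝ),
        ∫ u in Ioo (0:ℝ) w,
        (z - v) ^ (b - 1) * (x - v - y) ^ (a - 1) * (w - u) ^ (b - 1)
          * (w + y) ^ (-(a + b + 1)))
      = π * Gamma a * Gamma b / (Real.sin (π * a) * Gamma (a + b + 1))
          * ((z ^ b - (z - min z x) ^ b) / b) := by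
  have hinner : ∀ v ∈ Ioo 0 (min z x), ∫ y in Ioo 0 (x - v), ∫ w in Ioi 0, ∫ u in Ioo 0 w,
        (z - v) ^ (b - 1) * (x - v - y) ^ (a - 1) * (w - u) ^ (b - 1) * (w + y) ^ (-(a + b + 1))
      = (z - v) ^ (b - 1) * (beta (b + 1) a / b * beta (1 - a) a) := fun v hv =>
    integral_Ioo_integral_Ioi_integral_Ioo_sub_rpow_mul_add_rpow ha ha1 hb
      (sub_pos.2 (hv.2.trans_le (min_le_right z x))) _
  have hconst : beta (b + 1) a / b * beta (1 - a) a
      = π * Gamma a * Gamma b / (sin (π * a) * Gamma (a + b + 1)) := by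
    have hsin : sin (π * a) ≠ 0 :=
      (sin_pos_of_pos_of_lt_pi (by positivity) (by nlinarith [pi_pos])).ne'
    rw [beta, beta, sub_add_cancel, Gamma_one, div_one, mul_comm (Gamma (1 - a)),
      Gamma_mul_Gamma_one_sub, Gamma_add_one hb.ne', show b + 1 + a = a + b + 1 by ring]
    field_simp
  rw [setIntegral_congr_fun measurableSet_Ioo hinner, integral_mul_const,
    integral_Ioo_sub_rpow hb (le_min hz.le hx.le), hconst, mul_comm]

theorem statement8 (a b x z : ℝ) (ha : 0 < a) (ha1 : a < 1) (hb : 0 < b) (hb1 : b < 1)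
    (hx : 0 < x) (hz : 0 < z) :
    (∫ v in Ioo (0:ℝ) (min z x), ∫ y in Ioo (0:ℝ) (x - v), ∫ w in Ioi (0:ℝ),
        ∫ u in Ioo (0:ℝ) w,
        (z - v) ^ (b - 1) * (x - v - y) ^ (a - 1) * (w - u) ^ (b - 1)
          * (w + y) ^ (-(a + b + 1)))
      = π * Gamma a * Gamma b / (Real.sin (π * a) * Gamma (a + b + 1))
          * ((z ^ b - (z - min z x) ^ b) / b) :=
  statement8_general a b x z ha ha1 hb hx hz
end

section
/- For all real numbers a, b with 0 < a < 1, 0 < b < 1, and every x > 0, b · ∫₀^∞ e^{−y} (1−e^{−y})^{b−1} ( ∫_{x+y}^∞ e^{(b+1)u} (e^u − 1)^{−(a+b+1)} du ) dy = [Γ(a) Γ(b+1) / Γ(a+b+1)] · (e^x − 1)^{−a}. -/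
/-!
Swap the order of integration. The inner integral is then elementary, since
`e^{-y} (1 - e^{-y})^{b-1}` is the derivative of `(1 - e^{-y})^b / b`, and what is left is
`∫_{u > x} e^u (e^u - e^x)^b (e^u - 1)^{-(a+b+1)} du`. The substitutions `v = e^u` and
`v = 1 + (e^x - 1) / s` turn this into `(e^x - 1)^{-a} B(a, b + 1)`.
-/

open MeasureTheory Real Set

theorem integral_Ioi_mul_integral_Ioi_add_comm {h f : ℝ → ℝ} {x : ℝ}
    (hh : IntegrableOn h (Ioi 0)) (hf : IntegrableOn f (Ioi x)) :
    ∫ y in Ioi 0, h y * ∫ u in Ioi (x + y), f u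
      = ∫ u in Ioi x, f u * ∫ y in Ioo 0 (u - x), h y := by
  have hswap := integral_integral_swap (μ := volume.restrict (Ioi 0))
    (ν := volume.restrict (Ioi x)) (f := fun y u => h y * (Ioi (x + y)).indicator f u) <| by
      have hset : MeasurableSet {p : ℝ × ℝ | x + p.1 < p.2} :=
        measurableSet_lt (by fun_prop) (by fun_prop)
      refine ((hh.mul_prod hf).indicator hset).congr (ae_of_all _ fun ⟨y, u⟩ => ?_)
      by_cases hyu : x + y < u <;> simp [indicator, hyu]
  convert hswap using 1
  · refine setIntegral_congr_fun measurableSet_Ioi fun y hy => ?_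
    rw [integral_const_mul, integral_indicator measurableSet_Ioi,
      Measure.restrict_restrict measurableSet_Ioi, Ioi_inter_Ioi,
      sup_eq_left.2 (by linarith [mem_Ioi.1 hy])]
  · refine setIntegral_congr_fun measurableSet_Ioi fun u _ => ?_
    have hsec : (fun y => h y * (Ioi (x + y)).indicator f u) =
        fun y => f u * (Iio (u - x)).indicator h y := by
      ext y
      by_cases hyu : x + y < u
      · simp [indicator, hyu, show y < u - x by linarith, mul_comm]
      · simp [indicator, hyu, show ¬ y < u - x by linarith]
    rw [hsec, integral_const_mul, integral_indicator measurableSet_Iio,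
      Measure.restrict_restrict measurableSet_Iio, Iio_inter_Ioi]

theorem hasDerivAt_one_sub_exp_neg_rpow_div {b y : ℝ} (hb : b ≠ 0) (hy : 0 < y) :
    HasDerivAt (fun y => (1 - exp (-y)) ^ b / b) (exp (-y) * (1 - exp (-y)) ^ (b - 1)) y := by
  have hpos : 0 < 1 - exp (-y) := by simp [hy]
  refine (((hasDerivAt_neg y).exp.const_sub 1).rpow_const (p := b)
    (Or.inl hpos.ne')).div_const b |>.congr_deriv ?_
  field_simp

theorem continuous_one_sub_exp_neg_rpow_div {b : ℝ} (hb : 0 ≤ b) :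
    Continuous fun y => (1 - exp (-y)) ^ b / b :=
  ((continuous_const.sub continuous_neg.rexp).rpow_const fun _ => Or.inr hb).div_const b

theorem integrableOn_Ioi_exp_neg_mul_one_sub_exp_neg_rpow {b : ℝ} (hb : 0 < b) :
    IntegrableOn (fun y => exp (-y) * (1 - exp (-y)) ^ (b - 1)) (Ioi 0) := by
  refine integrableOn_Ioi_deriv_of_nonneg
    (continuous_one_sub_exp_neg_rpow_div hb.le).continuousWithinAt
    (fun y hy => hasDerivAt_one_sub_exp_neg_rpow_div hb.ne' hy) (fun y hy => ?_)
    (l := (1 - 0) ^ b / b) ?_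
  · have : 0 < 1 - exp (-y) := by simp [mem_Ioi.1 hy]
    positivity
  · exact ((tendsto_exp_neg_atTop_nhds_zero.const_sub 1).rpow_const (Or.inr hb.le)).div_const b

theorem integral_Ioo_exp_neg_mul_one_sub_exp_neg_rpow {b z : ℝ} (hb : 0 < b) (hz : 0 ≤ z) :
    ∫ y in Ioo 0 z, exp (-y) * (1 - exp (-y)) ^ (b - 1) = (1 - exp (-z)) ^ b / b := by
  rw [← integral_Ioc_eq_integral_Ioo, ← intervalIntegral.integral_of_le hz,
    intervalIntegral.integral_eq_sub_of_hasDerivAt_of_le hz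
      (continuous_one_sub_exp_neg_rpow_div hb.le).continuousOn
      (fun y hy => hasDerivAt_one_sub_exp_neg_rpow_div hb.ne' hy.1)
      ((intervalIntegrable_iff_integrableOn_Ioc_of_le hz).2
        ((integrableOn_Ioi_exp_neg_mul_one_sub_exp_neg_rpow hb).mono_set Ioc_subset_Ioi_self))]
  simp [zero_rpow hb.ne']

theorem integrableOn_Ioi_exp_mul_mul_exp_sub_one_rpow_neg {p q x : ℝ} (hx : 0 < x)
    (hq : 0 ≤ q) (hpq : p < q) :
    IntegrableOn (fun u => exp (p * u) * (exp u - 1) ^ (-q)) (Ioi x) := by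
  have hc : 0 < 1 - exp (-x) := by simp [hx]
  refine ((exp_neg_integrableOn_Ioi x (sub_pos.2 hpq)).const_mul ((1 - exp (-x)) ^ (-q))).mono'
    (by fun_prop) ((ae_restrict_iff' measurableSet_Ioi).2 (ae_of_all _ fun u hu => ?_))
  have hlow : (1 - exp (-x)) * exp u ≤ exp u - 1 := by
    have : 1 ≤ exp (-x) * exp u := by
      rw [← exp_add]; exact one_le_exp (by linarith [mem_Ioi.1 hu])
    linarith
  have hpos : 0 < exp u - 1 := (by positivity : (0:ℝ) < _).trans_le hlow
  rw [norm_of_nonneg (by positivity)]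
  calc exp (p * u) * (exp u - 1) ^ (-q)
      ≤ exp (p * u) * ((1 - exp (-x)) * exp u) ^ (-q) :=
        mul_le_mul_of_nonneg_left
          (rpow_le_rpow_of_nonpos (by positivity) hlow (neg_nonpos.2 hq)) (exp_pos _).le
    _ = (1 - exp (-x)) ^ (-q) * exp (-(q - p) * u) := by
        rw [mul_rpow hc.le (exp_pos u).le, ← exp_mul, mul_left_comm, ← exp_add]
        ring_nf

theorem integral_Ioo_rpow_mul_one_sub_rpow {p q : ℝ} (hp : 0 < p) (hq : 0 < q) :
    ∫ v in Ioo 0 1, v ^ (p - 1) * (1 - v) ^ (q - 1) = Gamma p * Gamma q / Gamma (p + q) := by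
  have h := Complex.betaIntegral_eq_Gamma_mul_div p q (by simpa) (by simpa)
  rw [Complex.betaIntegral, intervalIntegral.integral_of_le zero_le_one,
    integral_Ioc_eq_integral_Ioo, ← Complex.ofReal_add, Complex.Gamma_ofReal,
    Complex.Gamma_ofReal, Complex.Gamma_ofReal] at h
  rw [setIntegral_congr_fun measurableSet_Ioo
    (g := fun v : ℝ => ((v ^ (p - 1) * (1 - v) ^ (q - 1) : ℝ) : ℂ)) fun v hv => by
      push_cast [Complex.ofReal_cpow hv.1.le, Complex.ofReal_cpow (sub_pos.2 hv.2).le]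
      rfl, integral_complex_ofReal] at h
  exact_mod_cast h

theorem image_add_mul_inv_Ioo_zero_one (c : ℝ) {X : ℝ} (hX : 0 < X) :
    (fun s => c + X * s⁻¹) '' Ioo 0 1 = Ioi (c + X) := by
  ext v
  constructor
  · rintro ⟨s, ⟨hs0, hs1⟩, rfl⟩
    simpa using lt_mul_of_one_lt_right hX ((one_lt_inv₀ hs0).2 hs1)
  · intro hv
    have hv' : X < v - c := by simp only [mem_Ioi] at hv; linarith
    have hpos : 0 < v - c := hX.trans hv'
    refine ⟨X / (v - c), ⟨div_pos hX hpos, (div_lt_one hpos).2 hv'⟩, ?_⟩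
    field_simp
    ring

theorem integral_Ioi_sub_rpow_mul_sub_rpow_neg {a b c d : ℝ} (ha : 0 < a) (hb : -1 < b)
    (hcd : c < d) :
    ∫ v in Ioi d, (v - d) ^ b * (v - c) ^ (-(a + b + 1))
      = (d - c) ^ (-a) * (Gamma a * Gamma (b + 1) / Gamma (a + b + 1)) := by
  have hX : 0 < d - c := sub_pos.2 hcd
  have hsub := integral_image_eq_integral_abs_deriv_smul (measurableSet_Ioo (a := (0:ℝ)) (b := 1))
    (f := fun s => c + (d - c) * s⁻¹) (f' := fun s => (d - c) * -(s ^ 2)⁻¹)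
    (fun s hs => (((hasDerivAt_inv hs.1.ne').const_mul (d - c)).const_add c).hasDerivWithinAt)
    (fun s _ t _ hst => inv_injective (mul_left_cancel₀ hX.ne' (add_left_cancel hst)))
    (fun v => (v - d) ^ b * (v - c) ^ (-(a + b + 1)))
  have hbeta := integral_Ioo_rpow_mul_one_sub_rpow ha (by linarith : 0 < b + 1)
  rw [add_sub_cancel_right, ← add_assoc] at hbeta
  rw [image_add_mul_inv_Ioo_zero_one c hX, add_sub_cancel] at hsub
  rw [hsub, ← hbeta, ← integral_const_mul]
  refine setIntegral_congr_fun measurableSet_Ioo fun s ⟨hs0, hs1⟩ => ?_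
  simp only [smul_eq_mul, add_sub_cancel_left]
  rw [show c + (d - c) * s⁻¹ - d = (d - c) * s⁻¹ - (d - c) by ring]
  -- Every base is positive: write `d - c = e^L`, `s = e^M`, `1 - s = e^N` and compare exponents.
  generalize d - c = X at hX ⊢
  obtain ⟨L, rfl⟩ : ∃ L, exp L = X := ⟨log X, exp_log hX⟩
  obtain ⟨M, rfl⟩ : ∃ M, exp M = s := ⟨log s, exp_log hs0⟩
  obtain ⟨N, hN⟩ : ∃ N, exp N = 1 - exp M := ⟨log (1 - exp M), exp_log (by linarith)⟩
  have hdiff : exp L * (exp M)⁻¹ - exp L = exp L * exp N * (exp M)⁻¹ := by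
    rw [hN]; field_simp
  rw [hdiff, ← hN, abs_mul, abs_neg, abs_of_pos (exp_pos _), abs_of_pos (by positivity)]
  simp only [← exp_neg, ← exp_add, ← exp_mul, ← exp_nat_mul]
  congr 1
  push_cast
  ring

theorem statement9_general (a b x : ℝ) (ha : 0 < a) (hb : 0 < b) (hx : 0 < x) :
    b * (∫ y in Ioi (0:ℝ),
          Real.exp (-y) * (1 - Real.exp (-y)) ^ (b - 1) *
            ∫ u in Ioi (x + y), Real.exp ((b + 1) * u) * (Real.exp u - 1) ^ (-(a + b + 1)))
      = Gamma a * Gamma (b + 1) / Gamma (a + b + 1) * (Real.exp x - 1) ^ (-a) := by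
  have hf := integrableOn_Ioi_exp_mul_mul_exp_sub_one_rpow_neg (p := b + 1) hx
    (by linarith : 0 ≤ a + b + 1) (by linarith)
  calc _ = b * ∫ u in Ioi x, exp ((b + 1) * u) * (exp u - 1) ^ (-(a + b + 1)) *
          ∫ y in Ioo 0 (u - x), exp (-y) * (1 - exp (-y)) ^ (b - 1) := by
        rw [integral_Ioi_mul_integral_Ioi_add_comm
          (integrableOn_Ioi_exp_neg_mul_one_sub_exp_neg_rpow hb) hf]
    _ = ∫ u in Ioi x, exp u • ((exp u - exp x) ^ b * (exp u - 1) ^ (-(a + b + 1))) := by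
        rw [← integral_const_mul]
        refine setIntegral_congr_fun measurableSet_Ioi fun u hu => ?_
        have hxu : 0 ≤ u - x := sub_nonneg.2 (le_of_lt hu)
        have hfac : exp u - exp x = exp u * (1 - exp (-(u - x))) := by
          rw [mul_sub, ← exp_add]; ring_nf
        rw [integral_Ioo_exp_neg_mul_one_sub_exp_neg_rpow hb hxu, hfac,
          mul_rpow (exp_pos u).le (by simpa using hxu), ← exp_mul, smul_eq_mul,
          show (b + 1) * u = u + b * u by ring, exp_add]
        field_simp
    _ = ∫ v in Ioi (exp x), (v - exp x) ^ b * (v - 1) ^ (-(a + b + 1)) :=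
        integral_comp_exp_Ioi (fun v => (v - exp x) ^ b * (v - 1) ^ (-(a + b + 1))) x
    _ = _ := by
        rw [integral_Ioi_sub_rpow_mul_sub_rpow_neg ha (by linarith) (by simpa using hx)]
        ring

theorem statement9 (a b x : ℝ) (ha : 0 < a) (ha1 : a < 1) (hb : 0 < b) (hb1 : b < 1)
    (hx : 0 < x) :
    b * (∫ y in Ioi (0:ℝ),
          Real.exp (-y) * (1 - Real.exp (-y)) ^ (b - 1) *
            ∫ u in Ioi (x + y), Real.exp ((b + 1) * u) * (Real.exp u - 1) ^ (-(a + b + 1)))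
      = Gamma a * Gamma (b + 1) / Gamma (a + b + 1) * (Real.exp x - 1) ^ (-a) :=
  statement9_general a b x ha hb hx
end

section
/- For all real numbers a, b with 0 < a < 1, 0 < b < 1, and every x > 0, the triple integral ∫₀ˣ ∫_y^∞ ∫₀^∞ (1 − e^{−(x−y)})^{a−1} (1 − e^{−(v−y)})^{b−1} e^{−(v−y)} e^{(b+1)(u+v)} (e^{u+v} − 1)^{−(a+b+1)} du dv dy equals π Γ(a) Γ(b) / (sin(πa) Γ(a+b+1)). -/
/-!
Shift `w = u + v` and exchange the `v`- and `w`-integrals over the triangle `y < v < w`. The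
`v`-integral is elementary, `(1 - e^{-(w-y)})^b / b`, and the substitution `s = (e^w - 1)⁻¹`
turns the `w`-integral into a Beta integral over `(0, (e^y - 1)⁻¹)`, with value
`B(a, b + 1) / b · (e^y - 1)^{-a}`. The substitution `t = e^{-y}` then turns the `y`-integral
into `B(a, 1 - a) = Γ(a) Γ(1 - a) = π / sin (π a)`.
-/

open MeasureTheory Real Set
open scoped ENNReal
open ProbabilityTheory (beta)

open ProbabilityTheory in
theorem integral_Ioo_rpow_mul_one_sub_rpow_s12 {α β : ℝ} (hα : 0 < α) (hβ : 0 < β) :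
    ∫ t in Ioo (0 : ℝ) 1, t ^ (α - 1) * (1 - t) ^ (β - 1) = beta α β := by
  have hpdf := lintegral_betaPDF_eq_one hα hβ
  rw [lintegral_betaPDF, ← ENNReal.toReal_eq_one_iff, ← integral_eq_lintegral_of_nonneg_ae
    (ae_restrict_of_forall_mem measurableSet_Ioo fun t ht ↦ by
      simpa [betaPDFReal, ht.1, ht.2] using (betaPDFReal_pos ht.1 ht.2 hα hβ).le) (by fun_prop)]
    at hpdf
  simp_rw [mul_assoc] at hpdf
  rw [integral_const_mul] at hpdf
  have := (beta_pos hα hβ).ne'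
  field_simp at hpdf
  exact hpdf

theorem integral_Ioo_sub_rpow_mul_sub_rpow {α β c d : ℝ} (hα : 0 < α) (hβ : 0 < β)
    (hcd : c < d) :
    ∫ t in Ioo c d, (t - c) ^ (α - 1) * (d - t) ^ (β - 1)
      = (d - c) ^ (α + β - 1) * beta α β := by
  have hdc : 0 < d - c := sub_pos.2 hcd
  have hscale := intervalIntegral.smul_integral_comp_add_mul (a := 0) (b := 1)
    (fun t ↦ (t - c) ^ (α - 1) * (d - t) ^ (β - 1)) (d - c) c
  simp only [mul_zero, add_zero, mul_one, add_sub_cancel] at hscale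
  rw [← integral_Ioc_eq_integral_Ioo, ← intervalIntegral.integral_of_le hcd.le, ← hscale,
    intervalIntegral.integral_of_le zero_le_one, integral_Ioc_eq_integral_Ioo,
    ← integral_Ioo_rpow_mul_one_sub_rpow_s12 hα hβ, smul_eq_mul, ← integral_const_mul,
    ← integral_const_mul]
  refine setIntegral_congr_fun measurableSet_Ioo fun t ht ↦ ?_
  have h1t : 0 < 1 - t := sub_pos.2 ht.2
  rw [add_sub_cancel_left, show d - (c + (d - c) * t) = (d - c) * (1 - t) by ring,
    mul_rpow hdc.le ht.1.le, mul_rpow hdc.le h1t.le, rpow_sub_one hdc.ne',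
    rpow_sub_one hdc.ne', rpow_sub_one hdc.ne', rpow_add hdc]
  field_simp

section Substitution

variable {E : Type*} [NormedAddCommGroup E] [NormedSpace ℝ E]

theorem integral_Ioi_comp_add_right (f : ℝ → E) (c d : ℝ) :
    ∫ u in Ioi c, f (u + d) = ∫ w in Ioi (c + d), f w := by
  rw [← image_add_const_Ioi, integral_image_eq_integral_abs_deriv_smul (f := (· + d))
    measurableSet_Ioi (fun u _ ↦ ((hasDerivAt_id u).add_const d).hasDerivWithinAt)
    (add_left_injective d).injOn]
  simp

theorem integral_Ioo_comp_exp_neg (f : ℝ → E) {α β : ℝ} (hαβ : α ≤ β) :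
    ∫ y in Ioo α β, exp (-y) • f (exp (-y)) = ∫ t in Ioo (exp (-β)) (exp (-α)), f t := by
  have hanti : StrictAnti fun y : ℝ ↦ exp (-y) := fun _ _ h ↦ exp_lt_exp.2 (neg_lt_neg h)
  rw [← (by fun_prop : Continuous fun y : ℝ ↦ exp (-y)).continuousOn.image_Ioo_of_strictAntiOn
      hαβ (hanti.strictAntiOn _),
    integral_image_eq_integral_deriv_smul_of_antitoneOn measurableSet_Ioo
      (fun y _ ↦ (hasDerivAt_neg y).exp.hasDerivWithinAt) (hanti.antitone.antitoneOn _)]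
  simp

theorem image_inv_exp_sub_one_Ioi {y : ℝ} (hy : 0 < y) :
    (fun w ↦ (exp w - 1)⁻¹) '' Ioi y = Ioo 0 (exp y - 1)⁻¹ := by
  have hy1 : 0 < exp y - 1 := by linarith [one_lt_exp_iff.2 hy]
  ext s
  constructor
  · rintro ⟨w, hw, rfl⟩
    have : exp y < exp w := exp_lt_exp.2 hw
    exact ⟨inv_pos.2 (by linarith), inv_strictAnti₀ hy1 (by linarith)⟩
  · rintro ⟨hs, hsq⟩
    refine ⟨log (1 + s⁻¹), ?_, by simp [exp_log (by positivity : 0 < 1 + s⁻¹)]⟩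
    rw [mem_Ioi, lt_log_iff_exp_lt (by positivity)]
    linarith [(lt_inv_comm₀ hs hy1).1 hsq]

theorem integral_Ioi_comp_inv_exp_sub_one (f : ℝ → E) {y : ℝ} (hy : 0 < y) :
    ∫ w in Ioi y, (exp w / (exp w - 1) ^ 2) • f (exp w - 1)⁻¹
      = ∫ s in Ioo 0 (exp y - 1)⁻¹, f s := by
  have hpos : ∀ w ∈ Ioi y, 0 < exp w - 1 := fun w hw ↦ by
    linarith [one_lt_exp_iff.2 (hy.trans hw)]
  have hderiv : ∀ w ∈ Ioi y, HasDerivWithinAt (fun w ↦ (exp w - 1)⁻¹)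
      (-exp w / (exp w - 1) ^ 2) (Ioi y) w := fun w hw ↦
    (((hasDerivAt_exp w).sub_const 1).inv (hpos w hw).ne').hasDerivWithinAt
  rw [← image_inv_exp_sub_one_Ioi hy,
    integral_image_eq_integral_deriv_smul_of_antitoneOn measurableSet_Ioi hderiv
      (fun w hw v hv hwv ↦ inv_anti₀ (hpos w hw) (by gcongr))]
  simp [neg_div]

end Substitution

theorem lintegral_Ioi_mul_lintegral_Ioi_swap {f g : ℝ → ℝ≥0∞} (hf : Measurable f)
    (hg : Measurable g) (y : ℝ) :
    ∫⁻ v in Ioi y, f v * ∫⁻ w in Ioi v, g w = ∫⁻ w in Ioi y, g w * ∫⁻ v in Ioo y w, f v := by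
  set T : Set (ℝ × ℝ) := {p | y < p.1 ∧ p.1 < p.2}
  have hT : MeasurableSet T :=
    (measurableSet_lt measurable_const measurable_fst).inter
      (measurableSet_lt measurable_fst measurable_snd)
  have hleft : ∀ v, (Ioi y).indicator (fun v ↦ f v * ∫⁻ w in Ioi v, g w) v
      = ∫⁻ w, T.indicator (fun p ↦ f p.1 * g p.2) (v, w) := by
    intro v
    by_cases hv : y < v
    · rw [indicator_of_mem (mem_Ioi.2 hv), ← lintegral_const_mul _ hg,
        ← lintegral_indicator measurableSet_Ioi]
      congr 1 with w
      simp [T, indicator, hv]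
    · simp [T, indicator, hv]
  have hright : ∀ w, (Ioi y).indicator (fun w ↦ g w * ∫⁻ v in Ioo y w, f v) w
      = ∫⁻ v, T.indicator (fun p ↦ f p.1 * g p.2) (v, w) := by
    intro w
    by_cases hw : y < w
    · rw [indicator_of_mem (mem_Ioi.2 hw), ← lintegral_const_mul _ hf,
        ← lintegral_indicator measurableSet_Ioo]
      congr 1 with v
      simp [T, indicator, mul_comm]
    · have : ∀ v, ¬ (y < v ∧ v < w) := fun v h ↦ hw (h.1.trans h.2)
      simp [T, indicator, hw, this]
  rw [← lintegral_indicator measurableSet_Ioi, ← lintegral_indicator measurableSet_Ioi,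
    funext hleft, funext hright]
  exact lintegral_lintegral_swap ((by fun_prop : Measurable fun p : ℝ × ℝ ↦ f p.1 * g p.2)
    |>.indicator hT).aemeasurable

theorem setIntegral_mul_setIntegral_eq_toReal {f g : ℝ → ℝ} {A : Set ℝ} {s : ℝ → Set ℝ}
    (hA : MeasurableSet A) (hf : Measurable f) (hg : Measurable g)
    (hf0 : ∀ v ∈ A, 0 ≤ f v) (hg0 : ∀ v ∈ A, ∀ w ∈ s v, 0 ≤ g w) (hs : ∀ v, MeasurableSet (s v))
    (hgi : ∀ v ∈ A, IntegrableOn g (s v))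
    (hmeas : Measurable fun v ↦ ∫⁻ w in s v, ENNReal.ofReal (g w)) :
    ∫ v in A, f v * ∫ w in s v, g w
      = (∫⁻ v in A, ENNReal.ofReal (f v) * ∫⁻ w in s v, ENNReal.ofReal (g w)).toReal := by
  have hinner : ∀ v ∈ A, ∫ w in s v, g w = (∫⁻ w in s v, ENNReal.ofReal (g w)).toReal :=
    fun v hv ↦ integral_eq_lintegral_of_nonneg_ae
      (ae_restrict_of_forall_mem (hs v) (hg0 v hv)) hg.aestronglyMeasurable
  rw [integral_eq_lintegral_of_nonneg_ae]
  · refine congrArg ENNReal.toReal (setLIntegral_congr_fun hA fun v hv ↦ ?_)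
    rw [ENNReal.ofReal_mul (hf0 v hv),
      ofReal_integral_eq_lintegral_ofReal (hgi v hv) (ae_restrict_of_forall_mem (hs v) (hg0 v hv))]
  · exact ae_restrict_of_forall_mem hA fun v hv ↦
      mul_nonneg (hf0 v hv) (setIntegral_nonneg (hs v) (hg0 v hv))
  · refine (hf.mul (ENNReal.measurable_toReal.comp hmeas)).aestronglyMeasurable.congr
      (ae_restrict_of_forall_mem hA fun v hv ↦ ?_)
    simp [hinner v hv]

theorem integral_Ioi_mul_integral_Ioi_swap {f g : ℝ → ℝ} {y : ℝ} (hf : Measurable f)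
    (hg : Measurable g) (hf0 : ∀ v ∈ Ioi y, 0 ≤ f v) (hg0 : ∀ w ∈ Ioi y, 0 ≤ g w)
    (hfi : ∀ w ∈ Ioi y, IntegrableOn f (Ioo y w)) (hgi : ∀ v ∈ Ioi y, IntegrableOn g (Ioi v)) :
    ∫ v in Ioi y, f v * ∫ w in Ioi v, g w = ∫ w in Ioi y, g w * ∫ v in Ioo y w, f v := by
  rw [setIntegral_mul_setIntegral_eq_toReal (s := Ioi) measurableSet_Ioi hf hg hf0
      (fun v hv w hw ↦ hg0 w (mem_Ioi.2 (lt_trans hv hw))) (fun _ ↦ measurableSet_Ioi) hgi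
      (Antitone.measurable fun v v' h ↦ lintegral_mono_set (Ioi_subset_Ioi h)),
    setIntegral_mul_setIntegral_eq_toReal (s := Ioo y) measurableSet_Ioi hg hf hg0
      (fun w _ v hv ↦ hf0 v hv.1) (fun _ ↦ measurableSet_Ioo) hfi
      (Monotone.measurable fun w w' h ↦ lintegral_mono_set (Ioo_subset_Ioo_right h)),
    lintegral_Ioi_mul_lintegral_Ioi_swap (by fun_prop) (by fun_prop)]

theorem integral_Ioo_eq_sub_of_hasDerivAt_of_nonneg {f f' : ℝ → ℝ} {a b : ℝ} (hab : a ≤ b)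
    (hcont : ContinuousOn f (Icc a b)) (hderiv : ∀ x ∈ Ioo a b, HasDerivAt f (f' x) x)
    (hpos : ∀ x ∈ Ioo a b, 0 ≤ f' x) :
    IntegrableOn f' (Ioo a b) ∧ ∫ x in Ioo a b, f' x = f b - f a := by
  have hint := intervalIntegral.integrableOn_deriv_of_nonneg hcont hderiv hpos
  refine ⟨hint.mono_set Ioo_subset_Ioc_self, ?_⟩
  rw [← integral_Ioc_eq_integral_Ioo, ← intervalIntegral.integral_of_le hab,
    intervalIntegral.integral_eq_sub_of_hasDerivAt_of_le hab hcont hderiv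
      ((intervalIntegrable_iff_integrableOn_Ioc_of_le hab).2 hint)]

theorem integral_Ioo_one_sub_exp_neg_rpow {b y w : ℝ} (hb : 0 < b) (hyw : y ≤ w) :
    IntegrableOn (fun v ↦ (1 - exp (-(v - y))) ^ (b - 1) * exp (-(v - y))) (Ioo y w) ∧
      ∫ v in Ioo y w, (1 - exp (-(v - y))) ^ (b - 1) * exp (-(v - y))
        = (1 - exp (-(w - y))) ^ b / b := by
  have hbase : ∀ v ∈ Ioo y w, 0 < 1 - exp (-(v - y)) := fun v hv ↦
    sub_pos.2 (exp_lt_one_iff.2 (by linarith [hv.1]))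
  have h := integral_Ioo_eq_sub_of_hasDerivAt_of_nonneg (f := fun v ↦ (1 - exp (-(v - y))) ^ b / b)
    (f' := fun v ↦ (1 - exp (-(v - y))) ^ (b - 1) * exp (-(v - y))) hyw
    (by fun_prop (disch := positivity)) (fun v hv ↦ ?_) (fun v hv ↦ ?_)
  · simpa [zero_rpow hb.ne'] using h
  · have hd : HasDerivAt (fun v ↦ 1 - exp (-(v - y))) (exp (-(v - y))) v := by
      simpa using (((hasDerivAt_id v).sub_const y).neg.exp).const_sub 1
    refine ((hd.rpow_const (p := b) (Or.inl (hbase v hv).ne')).div_const b).congr_deriv ?_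
    field_simp
  · exact mul_nonneg (rpow_nonneg (hbase v hv).le _) (exp_pos _).le

theorem integrableOn_exp_mul_mul_exp_sub_one_rpow {a b v : ℝ} (ha : 0 < a)
    (habc : 0 ≤ a + b + 1) (hv : 0 < v) :
    IntegrableOn (fun w ↦ exp ((b + 1) * w) * (exp w - 1) ^ (-(a + b + 1))) (Ioi v) := by
  have hv1 : 0 < 1 - exp (-v) := sub_pos.2 (exp_lt_one_iff.2 (by linarith))
  refine Integrable.mono' ((exp_neg_integrableOn_Ioi v ha).const_mul
      ((1 - exp (-v)) ^ (-(a + b + 1)))) (by fun_prop)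
    (ae_restrict_of_forall_mem measurableSet_Ioi fun w hw ↦ ?_)
  have hw1 : 0 < 1 - exp (-w) := sub_pos.2 (exp_lt_one_iff.2 (by linarith [mem_Ioi.1 hw]))
  have hsplit : exp w - 1 = exp w * (1 - exp (-w)) := by
    rw [mul_sub, ← exp_add, add_neg_cancel, exp_zero, mul_one]
  rw [hsplit, mul_rpow (exp_pos w).le hw1.le, ← exp_mul, ← mul_assoc, ← exp_add,
    norm_of_nonneg (by positivity), mul_comm ((1 - exp (-v)) ^ _),
    show (b + 1) * w + w * -(a + b + 1) = -a * w by ring]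
  gcongr exp _ * ?_
  exact rpow_le_rpow_of_nonpos hv1 (by gcongr; exact mem_Ioi.1 hw |>.le) (by linarith)

-- The integrand in the variable `s = (exp w - 1)⁻¹`: the Jacobian times a Beta integrand.
theorem exp_mul_exp_sub_one_rpow_mul_eq {a b y w : ℝ} (hy : 0 < y) (hyw : y < w) :
    exp ((b + 1) * w) * (exp w - 1) ^ (-(a + b + 1)) * ((1 - exp (-(w - y))) ^ b / b)
      = exp w / (exp w - 1) ^ 2 * ((exp y - 1) ^ b / b
        * ((exp w - 1)⁻¹ ^ (a - 1) * ((exp y - 1)⁻¹ - (exp w - 1)⁻¹) ^ b)) := by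
  have hYE : exp y < exp w := exp_lt_exp.2 hyw
  have hY : 0 < exp y - 1 := by linarith [one_lt_exp_iff.2 hy]
  have hE : 0 < exp w - 1 := by linarith
  have hEY : 0 < exp w - exp y := by linarith
  have h1 : 1 - exp (-(w - y)) = (exp w - exp y) / exp w := by
    rw [neg_sub, exp_sub]; field_simp
  have h2 : (exp y - 1)⁻¹ - (exp w - 1)⁻¹ = (exp w - exp y) / ((exp y - 1) * (exp w - 1)) := by
    field_simp; ring
  rw [h1, h2, div_rpow hEY.le (exp_pos w).le, div_rpow hEY.le (by positivity),
    mul_rpow hY.le hE.le, inv_rpow hE.le, rpow_sub_one hE.ne', mul_comm (b + 1), exp_mul,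
    rpow_add_one (exp_pos w).ne', show -(a + b + 1) = -(a + b) - 1 by ring,
    rpow_sub_one hE.ne', rpow_neg hE.le, rpow_add hE]
  field_simp

theorem integral_Ioi_exp_mul_exp_sub_one_rpow_mul {a b y : ℝ} (ha : 0 < a) (hb : 0 < b)
    (hy : 0 < y) :
    ∫ w in Ioi y,
        exp ((b + 1) * w) * (exp w - 1) ^ (-(a + b + 1)) * ((1 - exp (-(w - y))) ^ b / b)
      = beta a (b + 1) / b * (exp y - 1) ^ (-a) := by
  have hY : 0 < exp y - 1 := by linarith [one_lt_exp_iff.2 hy]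
  have hsub := integral_Ioi_comp_inv_exp_sub_one
    (fun s ↦ (exp y - 1) ^ b / b * (s ^ (a - 1) * ((exp y - 1)⁻¹ - s) ^ b)) hy
  have hbeta := integral_Ioo_sub_rpow_mul_sub_rpow ha (by linarith : 0 < b + 1) (inv_pos.2 hY)
  simp only [smul_eq_mul, sub_zero, add_sub_cancel_right] at hsub hbeta
  rw [setIntegral_congr_fun measurableSet_Ioi fun w hw ↦ exp_mul_exp_sub_one_rpow_mul_eq hy hw,
    hsub, integral_const_mul, hbeta, inv_rpow hY.le, show a + (b + 1) - 1 = a + b by ring,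
    rpow_add hY, rpow_neg hY.le]
  field_simp

theorem integral_Ioi_mul_integral_Ioi_exp_mul_exp_sub_one_rpow {a b y : ℝ} (ha : 0 < a)
    (hb : 0 < b) (hy : 0 < y) :
    ∫ v in Ioi y, (1 - exp (-(v - y))) ^ (b - 1) * exp (-(v - y))
        * ∫ u in Ioi (0 : ℝ), exp ((b + 1) * (u + v)) * (exp (u + v) - 1) ^ (-(a + b + 1))
      = beta a (b + 1) / b * (exp y - 1) ^ (-a) := by
  have hH0 : ∀ v ∈ Ioi y, 0 ≤ (1 - exp (-(v - y))) ^ (b - 1) * exp (-(v - y)) := fun v hv ↦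
    mul_nonneg (rpow_nonneg (sub_nonneg.2 (exp_le_one_iff.2 (by linarith [mem_Ioi.1 hv]))) _)
      (exp_pos _).le
  have hK0 : ∀ w ∈ Ioi y, 0 ≤ exp ((b + 1) * w) * (exp w - 1) ^ (-(a + b + 1)) := fun w hw ↦
    mul_nonneg (exp_pos _).le
      (rpow_nonneg (sub_nonneg.2 (one_le_exp (by linarith [mem_Ioi.1 hw]))) _)
  calc _ = ∫ v in Ioi y, (1 - exp (-(v - y))) ^ (b - 1) * exp (-(v - y))
        * ∫ w in Ioi v, exp ((b + 1) * w) * (exp w - 1) ^ (-(a + b + 1)) := by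
        refine setIntegral_congr_fun measurableSet_Ioi fun v _ ↦ ?_
        rw [integral_Ioi_comp_add_right
          (fun w ↦ exp ((b + 1) * w) * (exp w - 1) ^ (-(a + b + 1))), zero_add]
    _ = ∫ w in Ioi y, exp ((b + 1) * w) * (exp w - 1) ^ (-(a + b + 1))
        * ∫ v in Ioo y w, (1 - exp (-(v - y))) ^ (b - 1) * exp (-(v - y)) :=
      integral_Ioi_mul_integral_Ioi_swap (by fun_prop) (by fun_prop) hH0 hK0
        (fun w hw ↦ (integral_Ioo_one_sub_exp_neg_rpow hb (mem_Ioi.1 hw).le).1)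
        (fun v hv ↦ integrableOn_exp_mul_mul_exp_sub_one_rpow ha (by linarith)
          (hy.trans (mem_Ioi.1 hv)))
    _ = ∫ w in Ioi y, exp ((b + 1) * w) * (exp w - 1) ^ (-(a + b + 1))
        * ((1 - exp (-(w - y))) ^ b / b) :=
      setIntegral_congr_fun measurableSet_Ioi fun w hw ↦ by
        rw [(integral_Ioo_one_sub_exp_neg_rpow hb (mem_Ioi.1 hw).le).2]
    _ = _ := integral_Ioi_exp_mul_exp_sub_one_rpow_mul ha hb hy

-- The integrand in the variable `t = exp (-y)`: the Jacobian times a Beta integrand.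
theorem one_sub_exp_rpow_mul_exp_sub_one_rpow_eq {a x y : ℝ} (hy : 0 < y) (hyx : y < x) :
    (1 - exp (-(x - y))) ^ (a - 1) * (exp y - 1) ^ (-a)
      = exp (-y) * ((exp (-y) - exp (-x)) ^ (a - 1) * (1 - exp (-y)) ^ (1 - a - 1)) := by
  have ht : 0 < exp (-y) := exp_pos _
  have htc : 0 < exp (-y) - exp (-x) := sub_pos.2 (exp_lt_exp.2 (by linarith))
  have ht1 : 0 < 1 - exp (-y) := sub_pos.2 (exp_lt_one_iff.2 (by linarith))
  have h1 : 1 - exp (-(x - y)) = (exp (-y) - exp (-x)) / exp (-y) := by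
    rw [neg_sub, sub_eq_add_neg y x, exp_add, exp_neg y]; field_simp
  have h2 : exp y - 1 = (1 - exp (-y)) / exp (-y) := by
    rw [exp_neg]; field_simp
  rw [h1, h2, div_rpow htc.le ht.le, div_rpow ht1.le ht.le, show 1 - a - 1 = -a by ring,
    rpow_sub_one ht.ne', rpow_neg ht.le, rpow_neg ht1.le]
  field_simp

theorem integral_Ioo_one_sub_exp_rpow_mul_exp_sub_one_rpow {a x : ℝ} (ha : 0 < a) (ha1 : a < 1)
    (hx : 0 < x) :
    ∫ y in Ioo 0 x, (1 - exp (-(x - y))) ^ (a - 1) * (exp y - 1) ^ (-a)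
      = beta a (1 - a) := by
  have hsub := integral_Ioo_comp_exp_neg
    (fun t ↦ (t - exp (-x)) ^ (a - 1) * (1 - t) ^ (1 - a - 1)) hx.le
  simp only [smul_eq_mul, neg_zero, exp_zero] at hsub
  rw [setIntegral_congr_fun measurableSet_Ioo fun y hy ↦
      one_sub_exp_rpow_mul_exp_sub_one_rpow_eq hy.1 hy.2, hsub,
    integral_Ioo_sub_rpow_mul_sub_rpow ha (by linarith) (exp_lt_one_iff.2 (by linarith))]
  simp

theorem statement12_general (a b x : ℝ) (ha : 0 < a) (ha1 : a < 1) (hb : 0 < b)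
    (hx : 0 < x) :
    (∫ y in Ioo (0:ℝ) x, ∫ v in Ioi y, ∫ u in Ioi (0:ℝ),
        (1 - Real.exp (-(x - y))) ^ (a - 1) * (1 - Real.exp (-(v - y))) ^ (b - 1)
          * Real.exp (-(v - y)) * Real.exp ((b + 1) * (u + v))
          * (Real.exp (u + v) - 1) ^ (-(a + b + 1)))
      = π * Gamma a * Gamma b / (Real.sin (π * a) * Gamma (a + b + 1)) := by
  have hinner : ∀ y ∈ Ioo 0 x, ∫ v in Ioi y, ∫ u in Ioi (0:ℝ),
        (1 - exp (-(x - y))) ^ (a - 1) * (1 - exp (-(v - y))) ^ (b - 1)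
          * exp (-(v - y)) * exp ((b + 1) * (u + v)) * (exp (u + v) - 1) ^ (-(a + b + 1))
      = beta a (b + 1) / b
          * ((1 - exp (-(x - y))) ^ (a - 1) * (exp y - 1) ^ (-a)) := by
    intro y hy
    have h := integral_Ioi_mul_integral_Ioi_exp_mul_exp_sub_one_rpow ha hb hy.1
    simp only [mul_assoc] at h
    simp only [mul_assoc, integral_const_mul, h]
    ring
  rw [setIntegral_congr_fun measurableSet_Ioo hinner, integral_const_mul,
    integral_Ioo_one_sub_exp_rpow_mul_exp_sub_one_rpow ha ha1 hx]
  have hsin : sin (π * a) ≠ 0 := (sin_pos_of_pos_of_lt_pi (by positivity)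
    (by nlinarith [pi_pos])).ne'
  have hG : Gamma (a + b + 1) ≠ 0 := (Gamma_pos_of_pos (by positivity)).ne'
  rw [beta, beta, Gamma_add_one hb.ne', add_sub_cancel,
    Gamma_one, div_one, ← add_assoc, Gamma_mul_Gamma_one_sub]
  field_simp

theorem statement12 (a b x : ℝ) (ha : 0 < a) (ha1 : a < 1) (hb : 0 < b) (hb1 : b < 1)
    (hx : 0 < x) :
    (∫ y in Ioo (0:ℝ) x, ∫ v in Ioi y, ∫ u in Ioi (0:ℝ),
        (1 - Real.exp (-(x - y))) ^ (a - 1) * (1 - Real.exp (-(v - y))) ^ (b - 1)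
          * Real.exp (-(v - y)) * Real.exp ((b + 1) * (u + v))
          * (Real.exp (u + v) - 1) ^ (-(a + b + 1)))
      = π * Gamma a * Gamma b / (Real.sin (π * a) * Gamma (a + b + 1)) :=
  statement12_general a b x ha ha1 hb hx
end
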